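/- Let n ≥ 7 be odd and let A be the complementary-left-right majority network on n nodes. If configuration x has exactly ⌈n/2⌉ ones and the number of ones among the nodes of S = {0,...,⌊n/2⌋−2} is i with 1 ≤ i ≤ ⌊n/2⌋−2, then A(x) has at least ⌈n/2⌉+1 ones. -/

import Mathlib

/-!
Since `x` has `⌊n/2⌋ + 1` ones and every node misses exactly two of the `n` nodes, a node of
`A(x)` is `0` exactly when both nodes it misses are ones. The nodes of `U` miss the consecutive
pairs of the cycle `S`, and those of `R` the consecutive pairs of the cycle `T`, each pair exactly
once. On a cycle carrying `k` ones and at least one zero there are at most `k - 1` consecutive pairs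
of ones; as `S` carries `i` ones and `T` the remaining `⌊n/2⌋ + 1 - i`, neither cycle is constant,
so `A(x)` has at most `⌊n/2⌋ - 1` zeros.
-/

/-- Number of `true` entries of `x` inside the finite set `S`. -/
def onesIn {V : Type*} [DecidableEq V] (S : Finset V) (x : V → Bool) : ℕ :=
  (S.filter (fun v => x v = true)).card

/-- Total number of ones in a configuration. -/
def ones {V : Type*} [Fintype V] [DecidableEq V] (x : V → Bool) : ℕ :=
  onesIn Finset.univ x

/-- Total number of zeros in a configuration. -/
def zeros {V : Type*} [Fintype V] [DecidableEq V] (x : V → Bool) : ℕ :=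
  (Finset.univ.filter (fun v => x v = false)).card

/-- One synchronous step of the majority Boolean automata network with
in-neighborhoods `N`: each node takes the majority state among its
in-neighbors, keeping its current state in case of a tie. -/
def majStep {V : Type*} [Fintype V] [DecidableEq V]
    (N : V → Finset V) (x : V → Bool) : V → Bool :=
  fun v =>
    if (N v).card < 2 * onesIn (N v) x then true
    else if 2 * onesIn (N v) x < (N v).card then false
    else x v

/-- In-neighborhoods of the complementary-left-right digraph.
With h = ⌊n/2⌋: U = (0,2,...,h-1), R = (1,h,...,n-1), S = (0,...,h-2)
(so S_j = j, |S| = h-1), T = (h-1,...,n-1) (so T_j = h-1+j, |T| = h+2).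
Node U_i sees V minus {S_((i+1) mod |S|), S_((i+2) mod |S|)};
node R_i sees V minus {T_((i-1) mod |T|), T_((i-2) mod |T|)}. -/
def clrN (n : ℕ) (v : Fin n) : Finset (Fin n) :=
  let h := n / 2
  let sLen := h - 1
  let tLen := h + 2
  if v.val = 0 ∨ (2 ≤ v.val ∧ v.val ≤ h - 1) then
    -- v = U_i with i = 0 if v = 0, else i = v - 1
    let i := if v.val = 0 then 0 else v.val - 1
    Finset.univ.filter (fun u : Fin n =>
      u.val ≠ (i + 1) % sLen ∧ u.val ≠ (i + 2) % sLen)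
  else
    -- v = R_i with i = 0 if v = 1, else i = v - h + 1
    let i := if v.val = 1 then 0 else v.val - h + 1
    Finset.univ.filter (fun u : Fin n =>
      u.val ≠ h - 1 + (i + tLen - 1) % tLen ∧
      u.val ≠ h - 1 + (i + tLen - 2) % tLen)

open Finset

section Majority

variable {V : Type*} [DecidableEq V]

theorem onesIn_pair {p q : V} (hpq : p ≠ q) (x : V → Bool) :
    onesIn {p, q} x = (if x p then 1 else 0) + (if x q then 1 else 0) := by
  cases hp : x p <;> cases hq : x q <;>
    simp [onesIn, filter_insert, filter_singleton, hp, hq, hpq]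

variable [Fintype V]

theorem onesIn_compl_add_onesIn (s : Finset V) (x : V → Bool) :
    onesIn sᶜ x + onesIn s x = ones x := by
  rw [ones, onesIn, onesIn, onesIn, ← card_union_of_disjoint
    (disjoint_filter_filter disjoint_compl_left), ← filter_union, union_comm, union_compl]

theorem ones_add_zeros (x : V → Bool) : ones x + zeros x = Fintype.card V := by
  rw [ones, onesIn, zeros, ← card_univ]
  simpa using card_filter_add_card_filter_not (s := univ) (fun v => x v = true)

theorem majStep_eq_false_iff {N : V → Finset V} {x : V → Bool} {v p q : V} (hpq : p ≠ q)
    (hN : N v = {p, q}ᶜ) (hx : Fintype.card V + 1 = 2 * ones x) :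
    majStep N x v = false ↔ x p = true ∧ x q = true := by
  have hcard : #(N v) + 2 = Fintype.card V := by
    rw [hN, ← card_pair hpq, card_compl_add_card]
  have hsplit := onesIn_compl_add_onesIn {p, q} x
  rw [onesIn_pair hpq, ← hN] at hsplit
  unfold majStep
  cases hp : x p <;> cases hq : x q <;> simp only [hp, hq] at hsplit <;>
    split_ifs <;> simp_all <;> omega

end Majority

/-- Some `1` of the cycle is followed by a `0`. -/
theorem ZMod.card_filter_and_add_one_lt {m : ℕ} [NeZero m] (g : ZMod m → Bool)
    (hpos : 0 < #{j | g j = true}) (hlt : #{j | g j = true} < m) :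
    #{j | g j = true ∧ g (j + 1) = true} < #{j | g j = true} := by
  obtain ⟨a, ha⟩ : ∃ a, g a = true := by simpa [Finset.Nonempty] using hpos
  obtain ⟨b, hb⟩ : ∃ b, g b = false := by
    by_contra! hall
    simp [hall, ZMod.card] at hlt
  obtain ⟨j, hj, hj1⟩ : ∃ j, g j = true ∧ g (j + 1) = false := by
    by_contra! hstep
    have hfrom_a : ∀ k : ℕ, g (a + k) = true := by
      intro k
      induction k with
      | zero => simpa using ha
      | succ k ih => simpa [add_assoc] using hstep _ ih
    simpa [hb] using hfrom_a (b - a).val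
  refine card_lt_card ((ssubset_iff_of_subset
    (monotone_filter_right _ fun _ _ hk => hk.1)).2 ⟨j, ?_, ?_⟩) <;> simp [hj, hj1]

theorem ZMod.natCast_inj_of_lt {m a b : ℕ} (ha : a < m) (hb : b < m)
    (hab : (a : ZMod m) = b) : a = b := by
  simpa [ZMod.val_natCast_of_lt ha, ZMod.val_natCast_of_lt hb] using congrArg ZMod.val hab

section ComplementaryLeftRight

variable {h : ℕ}

def clrS (h : ℕ) (j : ZMod (h - 1)) : Fin (2 * h + 1) := Fin.ofNat _ j.val

def clrT (h : ℕ) (j : ZMod (h + 2)) : Fin (2 * h + 1) := Fin.ofNat _ (h - 1 + j.val)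

/-- For `v = U_i` this is `i + 1`: node `v` misses `S_{i+1}` and `S_{i+2}`. -/
def clrUStart (h : ℕ) (v : Fin (2 * h + 1)) : ZMod (h - 1) :=
  ((if v.val = 0 then 0 else v.val - 1 : ℕ) : ZMod (h - 1)) + 1

/-- For `v = R_i` this is `i - 2`: node `v` misses `T_{i-2}` and `T_{i-1}`. -/
def clrRStart (h : ℕ) (v : Fin (2 * h + 1)) : ZMod (h + 2) :=
  ((if v.val = 1 then 0 else v.val - h + 1 : ℕ) : ZMod (h + 2)) - 2

theorem clrS_val [NeZero (h - 1)] (j : ZMod (h - 1)) : (clrS h j).val = j.val := by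
  have := j.val_lt
  rw [clrS, Fin.val_ofNat, Nat.mod_eq_of_lt (by omega)]

theorem clrT_val (hh : 1 ≤ h) (j : ZMod (h + 2)) : (clrT h j).val = h - 1 + j.val := by
  have := j.val_lt
  rw [clrT, Fin.val_ofNat, Nat.mod_eq_of_lt (by omega)]

theorem clrS_injective [NeZero (h - 1)] : Function.Injective (clrS h) := fun j k hjk =>
  ZMod.val_injective _ (by simpa [Fin.ext_iff, clrS_val] using hjk)

theorem clrT_injective (hh : 1 ≤ h) : Function.Injective (clrT h) := fun j k hjk =>
  ZMod.val_injective _ (by simpa [Fin.ext_iff, clrT_val hh] using hjk)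

theorem clrS_natCast_val [NeZero (h - 1)] {v : Fin (2 * h + 1)} (hv : v.val ≤ h - 2) :
    clrS h (v.val : ZMod (h - 1)) = v := by
  have := NeZero.ne (h - 1)
  ext
  rw [clrS_val, ZMod.val_natCast_of_lt (by omega)]

theorem clrT_natCast_sub (hh : 1 ≤ h) {v : Fin (2 * h + 1)} (hv : h - 1 ≤ v.val) :
    clrT h ((v.val - (h - 1) : ℕ) : ZMod (h + 2)) = v := by
  ext
  rw [clrT_val hh, ZMod.val_natCast_of_lt (by omega)]
  omega

theorem card_filter_clrS [NeZero (h - 1)] (x : Fin (2 * h + 1) → Bool) :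
    #{j : ZMod (h - 1) | x (clrS h j) = true} =
      onesIn ({v | v.val ≤ h - 2} : Finset (Fin (2 * h + 1))) x := by
  refine card_nbij' (clrS h) (fun v => (v.val : ZMod (h - 1))) ?_ ?_ ?_ ?_
  · intro j hj
    rw [mem_coe, mem_filter] at hj ⊢
    refine ⟨?_, hj.2⟩
    have := j.val_lt
    simp only [mem_filter, mem_univ, true_and, clrS_val]
    omega
  · intro v hv
    simp_all [clrS_natCast_val]
  · intro j _
    simp [clrS_val]
  · intro v hv
    simp_all [clrS_natCast_val]

theorem card_filter_clrT (hh : 2 ≤ h) (x : Fin (2 * h + 1) → Bool) :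
    #{j : ZMod (h + 2) | x (clrT h j) = true} =
      onesIn ({v | v.val ≤ h - 2} : Finset (Fin (2 * h + 1)))ᶜ x := by
  have h1 : 1 ≤ h := by omega
  refine card_nbij' (clrT h) (fun v => ((v.val - (h - 1) : ℕ) : ZMod (h + 2))) ?_ ?_ ?_ ?_
  · intro j hj
    rw [mem_coe, mem_filter] at hj ⊢
    refine ⟨?_, hj.2⟩
    simp only [mem_compl, mem_filter, mem_univ, true_and, clrT_val h1]
    omega
  · intro v hv
    simp at hv
    simp [clrT_natCast_sub h1 (by omega : h - 1 ≤ v.val), hv]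
  · intro j _
    simp [clrT_val h1]
  · intro v hv
    simp at hv
    exact clrT_natCast_sub h1 (by omega)

theorem clrN_eq_compl_clrS_pair [NeZero (h - 1)] {v : Fin (2 * h + 1)}
    (hv : v.val = 0 ∨ (2 ≤ v.val ∧ v.val ≤ h - 1)) :
    clrN (2 * h + 1) v = {clrS h (clrUStart h v), clrS h (clrUStart h v + 1)}ᶜ := by
  have hdiv : (2 * h + 1) / 2 = h := by omega
  set i := if v.val = 0 then 0 else v.val - 1
  have hstart : clrUStart h v = ((i + 1 : ℕ) : ZMod (h - 1)) := by push_cast; rfl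
  have hnext : clrUStart h v + 1 = ((i + 2 : ℕ) : ZMod (h - 1)) := by
    rw [hstart]; push_cast; ring
  ext u
  rw [hnext, hstart]
  simp only [clrN, hdiv, if_pos hv, mem_filter, mem_univ, true_and, mem_compl, mem_insert,
    mem_singleton, not_or, Fin.ext_iff, clrS_val, ZMod.val_natCast]
  rfl

theorem clrN_eq_compl_clrT_pair {v : Fin (2 * h + 1)}
    (hv : ¬(v.val = 0 ∨ (2 ≤ v.val ∧ v.val ≤ h - 1))) :
    clrN (2 * h + 1) v = {clrT h (clrRStart h v), clrT h (clrRStart h v + 1)}ᶜ := by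
  have hdiv : (2 * h + 1) / 2 = h := by omega
  set i := if v.val = 1 then 0 else v.val - h + 1
  have hstart : clrRStart h v = ((i + (h + 2) - 2 : ℕ) : ZMod (h + 2)) := by
    have hzero := ZMod.natCast_self (h + 2)
    show (i : ZMod (h + 2)) - 2 = _
    rw [show i + (h + 2) - 2 = i + h by omega]
    push_cast at hzero ⊢
    linear_combination -hzero
  have hnext : clrRStart h v + 1 = ((i + (h + 2) - 1 : ℕ) : ZMod (h + 2)) := by
    rw [hstart, show i + (h + 2) - 1 = i + (h + 2) - 2 + 1 by omega]
    push_cast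
    rfl
  ext u
  rw [hnext, hstart]
  simp only [clrN, hdiv, if_neg hv, mem_filter, mem_univ, true_and, mem_compl, mem_insert,
    mem_singleton, not_or, Fin.ext_iff, clrT_val (by omega : 1 ≤ h), ZMod.val_natCast]
  exact and_comm

theorem clrUStart_injOn [NeZero (h - 1)] :
    Set.InjOn (clrUStart h) {v | v.val = 0 ∨ (2 ≤ v.val ∧ v.val ≤ h - 1)} := by
  rintro v (hv : _ ∨ _) w (hw : _ ∨ _) hvw
  have := NeZero.ne (h - 1)
  have hidx := ZMod.natCast_inj_of_lt (by split_ifs <;> omega) (by split_ifs <;> omega)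
    (add_right_cancel hvw)
  ext
  split_ifs at hidx <;> omega

theorem clrRStart_injOn :
    Set.InjOn (clrRStart h) {v | ¬(v.val = 0 ∨ (2 ≤ v.val ∧ v.val ≤ h - 1))} := by
  rintro v (hv : ¬_) w (hw : ¬_) hvw
  have hidx := ZMod.natCast_inj_of_lt (by split_ifs <;> omega) (by split_ifs <;> omega)
    (sub_left_injective hvw)
  ext
  split_ifs at hidx <;> omega

theorem zeros_majStep_clrN_le [NeZero (h - 1)] (hh : 3 ≤ h) {x : Fin (2 * h + 1) → Bool}
    (hx : ones x = h + 1) :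
    zeros (majStep (clrN (2 * h + 1)) x) ≤
      #{j : ZMod (h - 1) | x (clrS h j) = true ∧ x (clrS h (j + 1)) = true} +
        #{j : ZMod (h + 2) | x (clrT h j) = true ∧ x (clrT h (j + 1)) = true} := by
  have : Fact (1 < h - 1) := ⟨by omega⟩
  have : Fact (1 < h + 2) := ⟨by omega⟩
  have hcard : Fintype.card (Fin (2 * h + 1)) + 1 = 2 * ones x := by simp [hx]; ring
  rw [zeros, ← card_filter_add_card_filter_not
    (fun v : Fin (2 * h + 1) => v.val = 0 ∨ (2 ≤ v.val ∧ v.val ≤ h - 1))]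
  refine add_le_add (card_le_card_of_injOn (clrUStart h) ?_ (clrUStart_injOn.mono ?_))
    (card_le_card_of_injOn (clrRStart h) ?_ (clrRStart_injOn.mono ?_))
  · intro v hv
    simp only [coe_filter, mem_filter, mem_univ, true_and, Set.mem_ofPred_eq] at hv ⊢
    exact (majStep_eq_false_iff (clrS_injective.ne (by simp)) (clrN_eq_compl_clrS_pair hv.2)
      hcard).1 hv.1
  · exact fun v hv => (mem_filter.1 hv).2
  · intro v hv
    simp only [coe_filter, mem_filter, mem_univ, true_and, Set.mem_ofPred_eq] at hv ⊢
    exact (majStep_eq_false_iff ((clrT_injective (by omega)).ne (by simp))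
      (clrN_eq_compl_clrT_pair hv.2) hcard).1 hv.1
  · exact fun v hv => (mem_filter.1 hv).2

end ComplementaryLeftRight

theorem stmt9_general (n : ℕ) (hn : Odd n) (x : Fin n → Bool) (i : ℕ)
    (hi1 : 1 ≤ i) (hi2 : i ≤ n / 2 - 2)
    (hones : ones x = (n + 1) / 2)
    (hSones : onesIn (Finset.univ.filter (fun v : Fin n => v.val ≤ n / 2 - 2)) x = i) :
    (n + 1) / 2 + 1 ≤ ones (majStep (clrN n) x) := by
  obtain ⟨h, rfl⟩ := hn
  rw [show (2 * h + 1) / 2 = h by omega] at hi2 hSones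
  rw [show (2 * h + 1 + 1) / 2 = h + 1 by omega] at hones ⊢
  have : NeZero (h - 1) := ⟨by omega⟩
  have hS : #{j : ZMod (h - 1) | x (clrS h j) = true} = i := by
    rw [card_filter_clrS, ← hSones]
  have hT : #{j : ZMod (h + 2) | x (clrT h j) = true} = h + 1 - i := by
    have hsplit := onesIn_compl_add_onesIn ({v | v.val ≤ h - 2} : Finset (Fin (2 * h + 1))) x
    rw [card_filter_clrT (by omega)]
    omega
  have hpairsS := ZMod.card_filter_and_add_one_lt (fun j => x (clrS h j))
    (by omega) (by omega)
  have hpairsT := ZMod.card_filter_and_add_one_lt (fun j => x (clrT h j))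
    (by omega) (by omega)
  have hzeros := zeros_majStep_clrN_le (by omega) hones
  have htotal := ones_add_zeros (majStep (clrN (2 * h + 1)) x)
  simp only [Fintype.card_fin] at htotal
  omega

/-- in the complementary-left-right network, if x has exactly
⌈n/2⌉ ones and the number of ones in S = {0,...,⌊n/2⌋-2} is i with
1 ≤ i ≤ ⌊n/2⌋-2, then A(x) has at least ⌈n/2⌉+1 ones. -/
theorem stmt9 (n : ℕ) (hn : Odd n) (h7 : 7 ≤ n) (x : Fin n → Bool) (i : ℕ)
    (hi1 : 1 ≤ i) (hi2 : i ≤ n / 2 - 2)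
    (hones : ones x = (n + 1) / 2)
    (hSones : onesIn (Finset.univ.filter (fun v : Fin n => v.val ≤ n / 2 - 2)) x = i) :
    (n + 1) / 2 + 1 ≤ ones (majStep (clrN n) x) :=
  stmt9_general n hn x i hi1 hi2 hones hSones
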